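/- arXiv:2508.15026 — 5 statements merged into one kernel-verified Lean document; each statement's English description precedes it below -/
import Mathlib

section
/- Let (r_k) be the radius sequence generated by the BP-MAP algorithm. Then for every k ≥ 0 one has 0 ≤ r_k ≤ r_{k+1} ≤ r̄, where r̄ is the optimal value of the basis pursuit problem. -/
open Filter Topology

/-- The ℓ¹-norm on ℝⁿ. -/
noncomputable def norm1 {n : ℕ} (x : EuclideanSpace ℝ (Fin n)) : ℝ := ∑ i, |x i|

lemma norm1_nonneg {n : ℕ} (x : EuclideanSpace ℝ (Fin n)) : 0 ≤ norm1 x :=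
  Finset.sum_nonneg fun i _ => abs_nonneg _

lemma norm_le_norm1 {n : ℕ} (v : EuclideanSpace ℝ (Fin n)) : ‖v‖ ≤ norm1 v := by
  rw [EuclideanSpace.norm_eq]
  have h1 : ∑ i, ‖v i‖ ^ 2 ≤ (∑ i, |v i|) ^ 2 := by
    simpa [Real.norm_eq_abs] using
      Finset.sum_sq_le_sq_sum_of_nonneg (s := Finset.univ) (f := fun i => |v i|)
        (fun i _ => abs_nonneg _)
  calc Real.sqrt (∑ i, ‖v i‖ ^ 2) ≤ Real.sqrt ((∑ i, |v i|) ^ 2) := Real.sqrt_le_sqrt h1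
    _ = ∑ i, |v i| := Real.sqrt_sq (Finset.sum_nonneg fun i _ => abs_nonneg _)

lemma norm1_smul {n : ℕ} (c : ℝ) (v : EuclideanSpace ℝ (Fin n)) :
    norm1 (c • v) = |c| * norm1 v := by
  simp [norm1, Finset.mul_sum, abs_mul]

/-- For the radius sequence (r_k) generated by BP-MAP, one has
`0 ≤ r_k ≤ r_{k+1} ≤ r̄` for all k. -/
theorem bpmap_radii_monotone_bounded {n m : ℕ} (hn : 1 ≤ n)
    (A : Matrix (Fin m) (Fin n) ℝ) (b : Fin m → ℝ)
    (M : Set (EuclideanSpace ℝ (Fin n)))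
    (hM : M = {x | A.mulVec (WithLp.ofLp x) = b})
    (hMne : M.Nonempty)
    (rbar : ℝ) (hrbar : rbar = sInf (norm1 '' M))
    (r : ℕ → ℝ) (z x : ℕ → EuclideanSpace ℝ (Fin n))
    (hr0 : r 0 = 0) (hz0 : z 0 = 0)
    (hxM : ∀ k, x k ∈ M)
    (hzB : ∀ k, norm1 (z k) ≤ r k)
    (hbap : ∀ k, ∀ y ∈ M, ∀ w : EuclideanSpace ℝ (Fin n),
      norm1 w ≤ r k → dist (z k) (x k) ≤ dist w y)
    (hrrec : ∀ k, r (k + 1) = r k + dist (z k) (x k)) :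
    ∀ k, 0 ≤ r k ∧ r k ≤ r (k + 1) ∧ r (k + 1) ≤ rbar := by
  have hbdd : BddBelow (norm1 '' M) := ⟨0, by rintro _ ⟨y, _, rfl⟩; exact norm1_nonneg y⟩
  have hne : (norm1 '' M).Nonempty := hMne.image _
  have hrbar_le : ∀ y ∈ M, rbar ≤ norm1 y := fun y hy =>
    hrbar ▸ csInf_le hbdd ⟨y, hy, rfl⟩
  have hrbar0 : 0 ≤ rbar := by
    rw [hrbar]; exact le_csInf hne (by rintro _ ⟨y, _, rfl⟩; exact norm1_nonneg y)
  -- key step: if 0 ≤ r k ≤ rbar then r (k+1) ≤ rbar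
  have key : ∀ k, 0 ≤ r k → r k ≤ rbar → r (k + 1) ≤ rbar := by
    intro k hk0 hkr
    rw [hrbar]
    apply le_csInf hne
    rintro _ ⟨y, hy, rfl⟩
    set t := norm1 y with ht
    have hrkt : r k ≤ t := hkr.trans (hrbar_le y hy)
    rw [hrrec k]
    rcases eq_or_lt_of_le (norm1_nonneg y) with h0 | h0
    · -- t = 0, so r k = 0 and norm1 y ≤ r k; take w = y
      have hd : dist (z k) (x k) ≤ dist y y :=
        hbap k y hy y (by rw [← h0]; exact hk0)
      simp only [dist_self] at hd
      linarith [dist_nonneg (x := z k) (y := x k)]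
    · -- t > 0, take w = (r k / t) • y
      set w : EuclideanSpace ℝ (Fin n) := (r k / t) • y with hw
      have hct : |r k / t| = r k / t := abs_of_nonneg (div_nonneg hk0 h0.le)
      have hw1 : norm1 w = r k := by
        rw [hw, norm1_smul, hct, div_mul_cancel₀ _ (ne_of_gt h0)]
      have hd : dist (z k) (x k) ≤ dist w y := hbap k y hy w hw1.le
      have hdw : dist w y ≤ t - r k := by
        have : dist w y = ‖(r k / t - 1) • y‖ := by
          rw [dist_eq_norm, hw, sub_smul, one_smul]
        rw [this, norm_smul, Real.norm_eq_abs,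
          abs_of_nonpos (by rw [sub_nonpos]; exact div_le_one_of_le₀ hrkt h0.le)]
        have hny : ‖y‖ ≤ t := norm_le_norm1 y
        have h1 : 0 ≤ 1 - r k / t := by
          rw [sub_nonneg]; exact div_le_one_of_le₀ hrkt h0.le
        calc -(r k / t - 1) * ‖y‖ = (1 - r k / t) * ‖y‖ := by ring_nf
          _ ≤ (1 - r k / t) * t := by nlinarith
          _ = t - r k := by rw [sub_mul, one_mul, div_mul_cancel₀ _ (ne_of_gt h0)]
      linarith
  intro k
  induction k with
  | zero =>
    have h1 : r 1 ≤ rbar := key 0 (by rw [hr0]) (by rw [hr0]; exact hrbar0)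
    refine ⟨hr0.ge, ?_, h1⟩
    rw [hrrec 0, hr0]; simpa using dist_nonneg
  | succ k ih =>
    obtain ⟨h0, h1, h2⟩ := ih
    have hk10 : 0 ≤ r (k + 1) := h0.trans h1
    have h3 : r (k + 2) ≤ rbar := key (k + 1) hk10 h2
    refine ⟨hk10, ?_, h3⟩
    rw [hrrec (k + 1)]; linarith [dist_nonneg (x := z (k+1)) (y := x (k+1))]
end

section
/- The displacement-vector sequence d^k := z^k − x^k generated by the BP-MAP algorithm converges to 0 in ℝⁿ. -/
open Filter Topology

/-- The displacement vectors d^k = z^k − x^k generated by BP-MAP tend to 0. -/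
theorem bpmap_displacement_tendsto_zero {n m : ℕ} (hn : 1 ≤ n)
    (A : Matrix (Fin m) (Fin n) ℝ) (b : Fin m → ℝ)
    (M : Set (EuclideanSpace ℝ (Fin n)))
    (hM : M = {x | A.mulVec x.ofLp = b})
    (hMne : M.Nonempty)
    (rbar : ℝ) (hrbar : rbar = sInf (norm1 '' M))
    (r : ℕ → ℝ) (z x : ℕ → EuclideanSpace ℝ (Fin n))
    (hr0 : r 0 = 0) (hz0 : z 0 = 0)
    (hxM : ∀ k, x k ∈ M)
    (hzB : ∀ k, norm1 (z k) ≤ r k)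
    (hbap : ∀ k, ∀ y ∈ M, ∀ w : EuclideanSpace ℝ (Fin n),
      norm1 w ≤ r k → dist (z k) (x k) ≤ dist w y)
    (hrrec : ∀ k, r (k + 1) = r k + dist (z k) (x k)) :
    Tendsto (fun k => z k - x k) atTop (𝓝 (0 : EuclideanSpace ℝ (Fin n))) := by
  have hne : (norm1 '' M).Nonempty := hMne.image _
  have hrbar0 : 0 ≤ rbar := by
    rw [hrbar]
    exact le_csInf hne (by rintro a ⟨v, _, rfl⟩; exact norm1_nonneg v)
  -- step lemma
  have hstep : ∀ k, 0 ≤ r k → r k ≤ rbar → dist (z k) (x k) ≤ rbar - r k := by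
    intro k hk0 hkr
    refine le_of_forall_pos_le_add ?_
    intro ε hε
    obtain ⟨a, ⟨xs, hxs, rfl⟩, hlt⟩ := Real.lt_sInf_add_pos hne hε
    rw [← hrbar] at hlt
    by_cases h : norm1 xs ≤ r k
    · have := hbap k xs hxs xs h
      simp at this
      rw [this, dist_self]
      linarith
    · push_neg at h
      have hpos : 0 < norm1 xs := lt_of_le_of_lt hk0 h
      set c : ℝ := r k / norm1 xs with hc
      have hc0 : 0 ≤ c := div_nonneg hk0 hpos.le
      have hc1 : c ≤ 1 := (div_le_one hpos).2 h.le
      have hw : norm1 (c • xs) ≤ r k := by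
        rw [norm1_smul, abs_of_nonneg hc0, hc, div_mul_cancel₀ _ hpos.ne']
      have hd := hbap k xs hxs (c • xs) hw
      have hdist : dist (c • xs) xs ≤ norm1 xs - r k := by
        have : dist (c • xs) xs = (1 - c) * ‖xs‖ := by
          rw [dist_eq_norm]
          have : c • xs - xs = (c - 1) • xs := by
            rw [sub_smul, one_smul]
          rw [this, norm_smul, Real.norm_eq_abs, abs_of_nonpos (by linarith)]
          ring
        rw [this]
        calc (1 - c) * ‖xs‖ ≤ (1 - c) * norm1 xs :=
              mul_le_mul_of_nonneg_left (norm_le_norm1 xs) (by linarith)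
          _ = norm1 xs - r k := by
              rw [hc]; field_simp
        done
      linarith
  -- r k ∈ [0, rbar] for all k
  have hbound : ∀ k, 0 ≤ r k ∧ r k ≤ rbar := by
    intro k
    induction k with
    | zero => exact ⟨hr0.ge, hr0.le.trans hrbar0⟩
    | succ k ih =>
      have hd := hstep k ih.1 ih.2
      have hdn : (0:ℝ) ≤ dist (z k) (x k) := dist_nonneg
      constructor
      · rw [hrrec]; linarith
      · rw [hrrec]; linarith
  have hmono : Monotone r := by
    apply monotone_nat_of_le_succ
    intro k
    rw [hrrec]
    have : (0:ℝ) ≤ dist (z k) (x k) := dist_nonneg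
    linarith
  have hbdd : BddAbove (Set.range r) := ⟨rbar, by rintro a ⟨k, rfl⟩; exact (hbound k).2⟩
  have hconv : Tendsto r atTop (𝓝 (⨆ k, r k)) := tendsto_atTop_ciSup hmono hbdd
  have h1 : Tendsto (fun k => r (k + 1)) atTop (𝓝 (⨆ k, r k)) :=
    hconv.comp (tendsto_add_atTop_nat 1)
  have hd : Tendsto (fun k => dist (z k) (x k)) atTop (𝓝 0) := by
    have := h1.sub hconv
    rw [sub_self] at this
    refine this.congr fun k => ?_
    rw [hrrec]; ring
  rw [tendsto_zero_iff_norm_tendsto_zero]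
  refine hd.congr fun k => ?_
  rw [← dist_eq_norm]
end

section
/- Let W, Y ⊆ ℝⁿ be nonempty closed convex sets, P_W and P_Y their metric projection maps, and let d be the metric projection of 0 onto the closed convex set cl(W − Y), the closure of {w − y : w ∈ W, y ∈ Y}. If (w^k) is an alternating projection sequence, i.e. w^{k+1} = P_W(P_Y(w^k)) for all k with arbitrary w⁰ ∈ ℝⁿ, then the sequence (w^k − P_Y(w^k)) converges to d. -/
open Filter Topology Pointwise

local notation "⟪" x ", " y "⟫" => @inner ℝ _ _ x y

lemma proj_vi {E : Type*} [NormedAddCommGroup E] [InnerProductSpace ℝ E]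
    {C : Set E} (hC : Convex ℝ C) {u z : E} (hz : z ∈ C)
    (hmin : ∀ p ∈ C, dist u z ≤ dist u p) :
    ∀ p ∈ C, ⟪u - z, p - z⟫ ≤ 0 := by
  have : Nonempty C := ⟨⟨z, hz⟩⟩
  have h : ‖u - z‖ = ⨅ w : C, ‖u - w‖ := by
    refine le_antisymm (le_ciInf fun p => ?_) ?_
    · simpa [dist_eq_norm] using hmin p p.2
    · have hbd : BddBelow (Set.range fun w : C => ‖u - w‖) :=
        ⟨0, fun _ ⟨_, h⟩ => h ▸ norm_nonneg _⟩
      exact ciInf_le hbd ⟨z, hz⟩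
  exact (norm_eq_iInf_iff_real_inner_le_zero hC hz).1 h

set_option maxHeartbeats 2000000 in
lemma aux_conv {n : ℕ}
    (W Y : Set (EuclideanSpace ℝ (Fin n)))
    (hWconv : Convex ℝ W) (hYconv : Convex ℝ Y)
    (PW PY : EuclideanSpace ℝ (Fin n) → EuclideanSpace ℝ (Fin n))
    (hPW : ∀ u, PW u ∈ W ∧ ∀ p ∈ W, dist u (PW u) ≤ dist u p)
    (hPY : ∀ u, PY u ∈ Y ∧ ∀ p ∈ Y, dist u (PY u) ≤ dist u p)
    (d : EuclideanSpace ℝ (Fin n))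
    (hd : d ∈ closure (W - Y) ∧ ∀ v ∈ closure (W - Y), dist 0 d ≤ dist 0 v)
    (w : ℕ → EuclideanSpace ℝ (Fin n))
    (hw : ∀ k, w (k + 1) = PW (PY (w k)))
    (hwW : ∀ k, w k ∈ W) :
    Tendsto (fun k => w k - PY (w k)) atTop (𝓝 d) := by
  set y : ℕ → EuclideanSpace ℝ (Fin n) := fun k => PY (w k) with hy
  set v : ℕ → EuclideanSpace ℝ (Fin n) := fun k => w k - y k with hv
  set u : ℕ → EuclideanSpace ℝ (Fin n) := fun k => w (k + 1) - y k with hu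
  have hyY : ∀ k, y k ∈ Y := fun k => (hPY (w k)).1
  have VIY : ∀ k, ∀ p ∈ Y, ⟪v k, p - y k⟫ ≤ 0 := fun k =>
    proj_vi hYconv (hyY k) (hPY (w k)).2
  have VIW : ∀ k, ∀ p ∈ W, ⟪y k - w (k + 1), p - w (k + 1)⟫ ≤ 0 := by
    intro k
    have := proj_vi hWconv (hPW (y k)).1 (hPW (y k)).2
    rwa [← hw k] at this
  set a : ℕ → ℝ := fun k => ‖v k‖ ^ 2 with ha
  set b : ℕ → ℝ := fun k => ‖u k‖ ^ 2 with hb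
  -- (1)
  have h1 : ∀ k, b k ≤ ⟪u k, v k⟫ := by
    intro k
    have h := VIW k (w k) (hwW k)
    have e1 : w k - w (k + 1) = v k - u k := by simp only [hv, hu]; abel
    rw [e1] at h
    have : ⟪-(u k), v k - u k⟫ ≤ 0 := by
      have e2 : y k - w (k+1) = -(u k) := by simp [hu]
      rwa [e2] at h
    rw [inner_neg_left, inner_sub_right, real_inner_self_eq_norm_sq] at this
    simp only [hb]; linarith
  -- (2)
  have h2 : ∀ k, a (k + 1) ≤ ⟪v (k + 1), u k⟫ := by
    intro k
    have h := VIY (k + 1) (y k) (hyY k)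
    have e1 : y k - y (k + 1) = v (k + 1) - u k := by simp only [hv, hu]; abel
    rw [e1, inner_sub_right, real_inner_self_eq_norm_sq] at h
    simp only [ha]; linarith
  have hba : ∀ k, b k ≤ a k := by
    intro k
    have h := h1 k
    have hcs := real_inner_le_norm (u k) (v k)
    simp only [ha, hb] at *
    nlinarith [norm_nonneg (u k), norm_nonneg (v k)]
  have hab : ∀ k, a (k + 1) ≤ b k := by
    intro k
    have h := h2 k
    have hcs := real_inner_le_norm (v (k + 1)) (u k)
    simp only [ha, hb] at *
    nlinarith [norm_nonneg (u k), norm_nonneg (v (k + 1))]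
  have hanti : ∀ k, a (k + 1) ≤ a k := fun k => (hab k).trans (hba k)
  have ha0 : ∀ k, 0 ≤ a k := fun k => sq_nonneg _
  have huv : ∀ k, ‖u k - v k‖ ^ 2 ≤ a k - b k := by
    intro k
    have h := h1 k
    have e := @norm_sub_sq_real (EuclideanSpace ℝ (Fin n)) _ _ (u k) (v k)
    simp only [ha, hb] at *
    nlinarith
  have hvu : ∀ k, ‖v (k + 1) - u k‖ ^ 2 ≤ b k - a (k + 1) := by
    intro k
    have h := h2 k
    have e := @norm_sub_sq_real (EuclideanSpace ℝ (Fin n)) _ _ (v (k + 1)) (u k)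
    have : ⟪v (k+1), u k⟫ = ⟪u k, v (k+1)⟫ := real_inner_comm _ _
    simp only [ha, hb] at *
    nlinarith
  -- limit of a
  have hbdd : BddBelow (Set.range a) := ⟨0, fun _ ⟨k, hk⟩ => hk ▸ ha0 k⟩
  set L : ℝ := ⨅ k, a k with hLdef
  have hL : Tendsto a atTop (𝓝 L) :=
    tendsto_atTop_ciInf (antitone_nat_of_succ_le hanti) hbdd
  have hLle : ∀ k, L ≤ a k := fun k => ciInf_le hbdd k
  -- drift bound for y
  have hystep : ∀ i, dist (y i) (y (i + 1)) ^ 2 ≤ a i - a (i + 1) := by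
    intro i
    have e1 : y i - y (i + 1) = v (i + 1) - u i := by simp only [hv, hu]; abel
    have := hvu i
    rw [dist_eq_norm, e1]
    have := hba i
    linarith [hvu i]
  have hdrift : ∀ k, dist (y 0) (y k) ^ 2 ≤ (k : ℝ) * a 0 := by
    intro k
    have h1 : dist (y 0) (y k) ≤ ∑ i ∈ Finset.range k, dist (y i) (y (i + 1)) :=
      dist_le_range_sum_dist y k
    have h2 : (∑ i ∈ Finset.range k, dist (y i) (y (i + 1))) ^ 2 ≤
        (k : ℝ) * ∑ i ∈ Finset.range k, dist (y i) (y (i + 1)) ^ 2 := by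
      have := Finset.sum_mul_sq_le_sq_mul_sq (Finset.range k) (fun _ => (1 : ℝ))
        (fun i => dist (y i) (y (i + 1)))
      simpa using this
    have h3 : (∑ i ∈ Finset.range k, dist (y i) (y (i + 1)) ^ 2) ≤ a 0 - a k := by
      have := Finset.sum_le_sum (fun i _ => hystep i) (s := Finset.range k)
      have htel : ∑ i ∈ Finset.range k, (a i - a (i + 1)) = a 0 - a k :=
        Finset.sum_range_sub' a k
      linarith [this.trans_eq htel]
    have hd0 : (0 : ℝ) ≤ dist (y 0) (y k) := dist_nonneg
    have hsum0 : (0 : ℝ) ≤ ∑ i ∈ Finset.range k, dist (y i) (y (i + 1)) :=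
      Finset.sum_nonneg fun i _ => dist_nonneg
    have hk0 : (0 : ℝ) ≤ (k : ℝ) := Nat.cast_nonneg k
    nlinarith [ha0 k]
  -- selection of good indices
  have hsel : ∀ ε > (0 : ℝ), ∀ K : ℕ, 1 ≤ K →
      ∃ k, K ≤ k ∧ (k : ℝ) * (a k - a (k + 1)) ≤ ε := by
    intro ε hε K hK
    by_contra hcon
    push_neg at hcon
    have hterm : ∀ i : ℕ, (ε / K) * (1 / (i + 1)) ≤ a (K + i) - a (K + i + 1) := by
      intro i
      have h1 := hcon (K + i) (Nat.le_add_right K i)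
      have hKi : (1 : ℝ) ≤ (K : ℝ) + i := by
        have : (1 : ℝ) ≤ (K : ℝ) := by exact_mod_cast hK
        linarith [Nat.cast_nonneg (α := ℝ) i]
      have hcast : ((K + i : ℕ) : ℝ) = (K : ℝ) + i := by push_cast; ring
      rw [hcast] at h1
      have hdiffpos : ε / ((K : ℝ) + i) < a (K + i) - a (K + i + 1) := by
        rw [div_lt_iff₀ (by linarith)]
        linarith [h1]
      have hKpos : (0 : ℝ) < (K : ℝ) := by exact_mod_cast hK
      have hle : ε / ((K : ℝ) * (i + 1)) ≤ ε / ((K : ℝ) + i) := by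
        apply div_le_div_of_nonneg_left (le_of_lt hε) (by linarith)
        have hinum : (0 : ℝ) ≤ (i : ℝ) := Nat.cast_nonneg i
        have hK1R : (1 : ℝ) ≤ (K : ℝ) := by exact_mod_cast hK
        nlinarith [mul_nonneg (sub_nonneg.2 hK1R) hinum]
      have : (ε / K) * (1 / (i + 1)) = ε / ((K : ℝ) * (i + 1)) := by
        field_simp
      rw [this]
      exact hle.trans (le_of_lt hdiffpos)
    have hub : ∀ m : ℕ, (ε / K) * (∑ i ∈ Finset.range m, (1 / (i + 1) : ℝ)) ≤ a 0 := by
      intro m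
      have h1 : ∑ i ∈ Finset.range m, (ε / K) * (1 / (i + 1) : ℝ) ≤
          ∑ i ∈ Finset.range m, (a (K + i) - a (K + i + 1)) :=
        Finset.sum_le_sum fun i _ => hterm i
      have htel : ∑ i ∈ Finset.range m, (a (K + i) - a (K + i + 1)) = a K - a (K + m) :=
        Finset.sum_range_sub' (fun i => a (K + i)) m
      rw [htel] at h1
      rw [Finset.mul_sum]
      have haK : a K ≤ a 0 := by
        have : Antitone a := antitone_nat_of_succ_le hanti
        exact this (Nat.zero_le K)
      linarith [ha0 (K + m), h1]
    have hKpos : (0 : ℝ) < (K : ℝ) := by exact_mod_cast hK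
    have hdiv : (0 : ℝ) < ε / K := div_pos hε hKpos
    obtain ⟨m, hm⟩ := (Real.tendsto_sum_range_one_div_nat_succ_atTop.eventually_gt_atTop
      (a 0 / (ε / K))).exists
    have := hub m
    rw [div_lt_iff₀ hdiv] at hm
    nlinarith [hm, this]
  -- core claim : L ≤ ‖c‖^2 for c in W - Y
  have hcore : ∀ c ∈ W - Y, L ≤ ‖c‖ ^ 2 := by
    rintro c ⟨wb, hwb, yb, hyb, rfl⟩
    set c := wb - yb with hc
    set M : ℝ := ‖yb - y 0‖ with hM
    -- b k ≤ ⟪u k, c⟫ + ⟪u k - v k, yb - y k⟫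
    have hbk : ∀ k, b k ≤ ⟪u k, c⟫ + ⟪u k - v k, yb - y k⟫ := by
      intro k
      have h1 := VIW k wb hwb
      have e2 : y k - w (k + 1) = -(u k) := by simp only [hu]; abel
      rw [e2, inner_neg_left] at h1
      have h1' : 0 ≤ ⟪u k, wb - w (k + 1)⟫ := by linarith
      have e3 : wb - y k = (wb - w (k + 1)) + u k := by simp only [hu]; abel
      have e4 : ⟪u k, wb - y k⟫ = ⟪u k, wb - w (k + 1)⟫ + b k := by
        rw [e3, inner_add_right, real_inner_self_eq_norm_sq]
      have e5 : wb - y k = c + (yb - y k) := by rw [hc]; abel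
      have e6 : ⟪u k, wb - y k⟫ = ⟪u k, c⟫ + ⟪u k, yb - y k⟫ := by
        rw [e5, inner_add_right]
      have e7 : ⟪u k, yb - y k⟫ = ⟪u k - v k, yb - y k⟫ + ⟪v k, yb - y k⟫ := by
        simp [inner_sub_left]
      have h8 := VIY k yb hyb
      linarith [e4, e6, e7]
    -- key ε-estimate
    have hkey : ∀ ε > (0 : ℝ), L ≤ Real.sqrt (L + ε) * ‖c‖ + ε * (M + Real.sqrt (a 0)) := by
      intro ε hε
      obtain ⟨K₁, hK₁⟩ := (hL.eventually (gt_mem_nhds (lt_add_of_pos_right L hε))).exists_forall_of_atTop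
      obtain ⟨k, hkK, hkgood⟩ := hsel (ε ^ 2) (by positivity) (max K₁ 1) (le_max_right _ _)
      have hk1 : 1 ≤ k := le_trans (le_max_right K₁ 1) hkK
      have hkK₁ : K₁ ≤ k := le_trans (le_max_left K₁ 1) hkK
      have hak : a k < L + ε := hK₁ k hkK₁
      have hkR : (1 : ℝ) ≤ (k : ℝ) := by exact_mod_cast hk1
      set s : ℝ := Real.sqrt (a k - a (k + 1)) with hs
      have hdiff0 : 0 ≤ a k - a (k + 1) := by linarith [hanti k]
      have hs2 : s ^ 2 = a k - a (k + 1) := Real.sq_sqrt hdiff0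
      have hsnn : 0 ≤ s := Real.sqrt_nonneg _
      have hsε : s ≤ ε := by
        nlinarith [hkgood, hs2, hsnn]
      have hssk : s * Real.sqrt k ≤ ε := by
        have h1 : (s * Real.sqrt k) ^ 2 ≤ ε ^ 2 := by
          have : (Real.sqrt (k : ℝ)) ^ 2 = (k : ℝ) := Real.sq_sqrt (by linarith)
          nlinarith [hkgood, hs2]
        nlinarith [mul_nonneg hsnn (Real.sqrt_nonneg (k : ℝ))]
      have huvs : ‖u k - v k‖ ≤ s := by
        rw [hs]
        rw [show a k - a (k + 1) = (a k - b k) + (b k - a (k + 1)) by ring]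
        refine (Real.le_sqrt (norm_nonneg _) (by linarith [huv k, hvu k, sq_nonneg (‖v (k+1) - u k‖)])).2 ?_
        linarith [huv k, hab k]
      have hyk : ‖yb - y k‖ ≤ M + Real.sqrt k * Real.sqrt (a 0) := by
        have h1 : ‖yb - y k‖ ≤ M + dist (y 0) (y k) := by
          have := norm_sub_le_norm_sub_add_norm_sub yb (y 0) (y k)
          rw [dist_eq_norm]
          exact le_trans (by simpa using this) (by rfl)
        have h2 : dist (y 0) (y k) ≤ Real.sqrt k * Real.sqrt (a 0) := by
          rw [← Real.sqrt_mul (by linarith : (0:ℝ) ≤ (k:ℝ))]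
          exact (Real.le_sqrt dist_nonneg (by positivity)).2 (hdrift k)
        linarith
      have huknorm : ‖u k‖ ≤ Real.sqrt (L + ε) := by
        have h1 : ‖u k‖ = Real.sqrt (b k) := by
          rw [hb, Real.sqrt_sq (norm_nonneg _)]
        rw [h1]
        exact Real.sqrt_le_sqrt (by linarith [hba k])
      have hC1 : ⟪u k, c⟫ ≤ Real.sqrt (L + ε) * ‖c‖ := by
        calc ⟪u k, c⟫ ≤ ‖u k‖ * ‖c‖ := real_inner_le_norm _ _
        _ ≤ Real.sqrt (L + ε) * ‖c‖ := by
            exact mul_le_mul_of_nonneg_right huknorm (norm_nonneg _)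
      have hC2 : ⟪u k - v k, yb - y k⟫ ≤ ε * (M + Real.sqrt (a 0)) := by
        calc ⟪u k - v k, yb - y k⟫ ≤ ‖u k - v k‖ * ‖yb - y k‖ := real_inner_le_norm _ _
        _ ≤ s * (M + Real.sqrt k * Real.sqrt (a 0)) := by
            apply mul_le_mul huvs hyk (norm_nonneg _) hsnn
        _ = s * M + (s * Real.sqrt k) * Real.sqrt (a 0) := by ring
        _ ≤ ε * M + ε * Real.sqrt (a 0) := by
            have hM0 : 0 ≤ M := norm_nonneg _
            have ha00 : 0 ≤ Real.sqrt (a 0) := Real.sqrt_nonneg _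
            have := mul_le_mul_of_nonneg_right hsε hM0
            have := mul_le_mul_of_nonneg_right hssk ha00
            linarith
        _ = ε * (M + Real.sqrt (a 0)) := by ring
      calc L ≤ a (k + 1) := hLle (k + 1)
      _ ≤ b k := hab k
      _ ≤ ⟪u k, c⟫ + ⟪u k - v k, yb - y k⟫ := hbk k
      _ ≤ Real.sqrt (L + ε) * ‖c‖ + ε * (M + Real.sqrt (a 0)) := by linarith
    -- take ε → 0
    have hlim : Tendsto (fun ε : ℝ => Real.sqrt (L + ε) * ‖c‖ + ε * (M + Real.sqrt (a 0)))
        (𝓝[>] (0:ℝ)) (𝓝 (Real.sqrt L * ‖c‖)) := by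
      have hcont : Continuous fun ε : ℝ => Real.sqrt (L + ε) * ‖c‖ + ε * (M + Real.sqrt (a 0)) := by
        continuity
      have := tendsto_nhdsWithin_of_tendsto_nhds (s := Set.Ioi (0:ℝ)) (hcont.tendsto 0)
      simpa using this
    have hfinal : L ≤ Real.sqrt L * ‖c‖ :=
      ge_of_tendsto hlim (eventually_nhdsWithin_of_forall fun ε hε => hkey ε hε)
    rcases le_or_gt L 0 with hL0 | hL0
    · exact hL0.trans (sq_nonneg _)
    · nlinarith [Real.sq_sqrt (le_of_lt hL0), Real.sqrt_nonneg L, norm_nonneg c,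
        Real.sqrt_pos.2 hL0]
  -- L ≤ ‖d‖^2 via closure
  have hclos : closure (W - Y) ⊆ {x : EuclideanSpace ℝ (Fin n) | L ≤ ‖x‖ ^ 2} :=
    closure_minimal (fun c hc => hcore c hc)
      (isClosed_le continuous_const (continuous_norm.pow 2))
  have hLd : L ≤ ‖d‖ ^ 2 := hclos hd.1
  -- ‖d‖^2 ≤ a k
  have hvmem : ∀ k, v k ∈ W - Y := fun k => Set.sub_mem_sub (hwW k) (hyY k)
  have hdle : ∀ k, ‖d‖ ^ 2 ≤ a k := by
    intro k
    have h1 := hd.2 (v k) (subset_closure (hvmem k))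
    simp only [dist_eq_norm, zero_sub, norm_neg] at h1
    have h0 : 0 ≤ ‖d‖ := norm_nonneg _
    simp only [ha]
    nlinarith [h1, norm_nonneg (v k)]
  have hLeq : L = ‖d‖ ^ 2 := le_antisymm hLd (le_ciInf fun k => hdle k)
  have hLtend : Tendsto a atTop (𝓝 (‖d‖ ^ 2)) := hLeq ▸ hL
  -- variational inequality for d
  have hdvi : ∀ k, ‖d‖ ^ 2 ≤ ⟪v k, d⟫ := by
    intro k
    have hCconv : Convex ℝ (closure (W - Y)) := (hWconv.sub hYconv).closure
    have h1 := proj_vi hCconv hd.1 (fun p hp => hd.2 p hp) (v k) (subset_closure (hvmem k))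
    rw [zero_sub, inner_neg_left, inner_sub_right, real_inner_self_eq_norm_sq] at h1
    have := real_inner_comm d (v k)
    linarith
  -- final squeeze
  have hfin : ∀ k, ‖v k - d‖ ^ 2 ≤ a k - ‖d‖ ^ 2 := by
    intro k
    have e := @norm_sub_sq_real (EuclideanSpace ℝ (Fin n)) _ _ (v k) (d)
    have := hdvi k
    simp only [ha] at *
    nlinarith
  have hsq : Tendsto (fun k => ‖v k - d‖ ^ 2) atTop (𝓝 0) := by
    apply squeeze_zero (fun k => sq_nonneg _) hfin
    have := hLtend.sub (tendsto_const_nhds (x := ‖d‖ ^ 2))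
    simpa using this
  have hnorm : Tendsto (fun k => ‖v k - d‖) atTop (𝓝 0) := by
    have h1 := (Real.continuous_sqrt.tendsto 0).comp hsq
    have h2 : ((fun x => Real.sqrt x) ∘ fun k => ‖v k - d‖ ^ 2) = fun k => ‖v k - d‖ := by
      funext k; simp [Function.comp, Real.sqrt_sq (norm_nonneg _)]
    rw [h2] at h1
    simpa using h1
  rw [tendsto_iff_norm_sub_tendsto_zero]
  exact hnorm

/-- For nonempty closed convex sets W, Y ⊆ ℝⁿ with metric projections
P_W, P_Y, and d the metric projection of 0 onto cl(W − Y), any alternating projection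
sequence w^{k+1} = P_W(P_Y(w^k)) satisfies w^k − P_Y(w^k) → d. -/
theorem map_displacement_convergence {n : ℕ}
    (W Y : Set (EuclideanSpace ℝ (Fin n)))
    (hWne : W.Nonempty) (hYne : Y.Nonempty)
    (hWc : IsClosed W) (hYc : IsClosed Y)
    (hWconv : Convex ℝ W) (hYconv : Convex ℝ Y)
    (PW PY : EuclideanSpace ℝ (Fin n) → EuclideanSpace ℝ (Fin n))
    (hPW : ∀ u, PW u ∈ W ∧ ∀ p ∈ W, dist u (PW u) ≤ dist u p)
    (hPY : ∀ u, PY u ∈ Y ∧ ∀ p ∈ Y, dist u (PY u) ≤ dist u p)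
    (d : EuclideanSpace ℝ (Fin n))
    (hd : d ∈ closure (W - Y) ∧ ∀ v ∈ closure (W - Y), dist 0 d ≤ dist 0 v)
    (w : ℕ → EuclideanSpace ℝ (Fin n))
    (hw : ∀ k, w (k + 1) = PW (PY (w k))) :
    Tendsto (fun k => w k - PY (w k)) atTop (𝓝 d) := by
  have key : Tendsto (fun k => w (k + 1) - PY (w (k + 1))) atTop (𝓝 d) := by
    apply aux_conv W Y hWconv hYconv PW PY hPW hPY d hd (fun k => w (k + 1))
      (fun k => by show w (k + 1 + 1) = PW (PY (w (k + 1))); exact hw (k + 1))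
      (fun k => by show w (k + 1) ∈ W; rw [hw k]; exact (hPW _).1)
  exact (tendsto_add_atTop_iff_nat 1).mp key
end

section
/- Let W, Y ⊆ ℝⁿ be nonempty closed convex sets whose distance is attained, i.e. there exist ŵ ∈ W and ŷ ∈ Y with ‖ŵ − ŷ‖₂ = dist(W, Y), and let d be the metric projection of 0 onto cl(W − Y). If (w^k) is an alternating projection sequence, w^{k+1} = P_W(P_Y(w^k)) for all k with arbitrary w⁰ ∈ ℝⁿ, then (w^k) converges to a point w̄ ∈ W satisfying dist(w̄, Y) = dist(W, Y), and (P_Y(w^k)) converges to w̄ − d, which belongs to Y and satisfies dist(w̄ − d, W) = dist(W, Y). -/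
open Filter Topology Pointwise RealInnerProductSpace

variable {E : Type*} [NormedAddCommGroup E] [InnerProductSpace ℝ E]

lemma proj_vi_s12 {K : Set E} (hK : Convex ℝ K) {u v : E} (hv : v ∈ K)
    (hmin : ∀ p ∈ K, dist u v ≤ dist u p) :
    ∀ x ∈ K, ⟪u - v, x - v⟫ ≤ 0 := by
  have : Nonempty K := ⟨⟨v, hv⟩⟩
  have heq : ‖u - v‖ = ⨅ x : K, ‖u - x‖ := by
    apply le_antisymm
    · apply le_ciInf
      intro x
      simpa [dist_eq_norm] using hmin x x.2
    · exact ciInf_le ⟨0, by rintro t ⟨x, rfl⟩; exact norm_nonneg _⟩ (⟨v, hv⟩ : K)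
  exact (norm_eq_iInf_iff_real_inner_le_zero hK hv).mp heq

lemma proj_uniq {K : Set E} (hK : Convex ℝ K) {u v₁ v₂ : E} (h1 : v₁ ∈ K) (h2 : v₂ ∈ K)
    (m1 : ∀ p ∈ K, dist u v₁ ≤ dist u p) (m2 : ∀ p ∈ K, dist u v₂ ≤ dist u p) : v₁ = v₂ := by
  have a := proj_vi_s12 hK h1 m1 v₂ h2
  have b := proj_vi_s12 hK h2 m2 v₁ h1
  have hsum : ⟪u - v₁, v₂ - v₁⟫ + ⟪u - v₂, v₁ - v₂⟫ = ⟪v₂ - v₁, v₂ - v₁⟫ := by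
    simp only [inner_sub_left, inner_sub_right]
    ring
  have key : ⟪v₂ - v₁, v₂ - v₁⟫ ≤ 0 := by rw [← hsum]; linarith
  have hz : v₂ - v₁ = 0 := real_inner_self_nonpos.mp key
  exact (sub_eq_zero.mp hz).symm

lemma firm_aux {a b : E} (h : 0 ≤ ⟪a - b, b⟫) : ‖b‖ ^ 2 + ‖a - b‖ ^ 2 ≤ ‖a‖ ^ 2 := by
  have hid : ‖b + (a - b)‖ ^ 2 = ‖b‖ ^ 2 + 2 * ⟪b, a - b⟫ + ‖a - b‖ ^ 2 :=
    norm_add_sq_real b (a - b)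
  rw [add_sub_cancel] at hid
  rw [real_inner_comm] at hid
  linarith

lemma firm_proj {K : Set E} {u v p q : E} (hp : p ∈ K) (hq : q ∈ K)
    (hup : ∀ x ∈ K, ⟪u - p, x - p⟫ ≤ 0) (hvq : ∀ x ∈ K, ⟪v - q, x - q⟫ ≤ 0) :
    ‖p - q‖ ^ 2 + ‖(u - p) - (v - q)‖ ^ 2 ≤ ‖u - v‖ ^ 2 := by
  have h1 := hup q hq
  have h2 := hvq p hp
  have key : 0 ≤ ⟪(u - v) - (p - q), p - q⟫ := by
    have hs : ⟪u - p, q - p⟫ + ⟪v - q, p - q⟫ = -⟪(u - v) - (p - q), p - q⟫ := by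
      simp only [inner_sub_left, inner_sub_right]
      ring
    linarith
  have hfa := firm_aux key
  have hab : (u - v) - (p - q) = (u - p) - (v - q) := by abel
  rw [hab] at hfa
  linarith

/-- If moreover the distance between W and Y is attained, then the
alternating projection sequence (w^k) converges to some w̄ ∈ W nearest to Y, and
(P_Y(w^k)) converges to w̄ − d ∈ Y, which is nearest to W. -/
theorem map_convergence_to_best_pair {n : ℕ}
    (W Y : Set (EuclideanSpace ℝ (Fin n)))
    (hWne : W.Nonempty) (hYne : Y.Nonempty)
    (hWc : IsClosed W) (hYc : IsClosed Y)
    (hWconv : Convex ℝ W) (hYconv : Convex ℝ Y)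
    (PW PY : EuclideanSpace ℝ (Fin n) → EuclideanSpace ℝ (Fin n))
    (hPW : ∀ u, PW u ∈ W ∧ ∀ p ∈ W, dist u (PW u) ≤ dist u p)
    (hPY : ∀ u, PY u ∈ Y ∧ ∀ p ∈ Y, dist u (PY u) ≤ dist u p)
    (d : EuclideanSpace ℝ (Fin n))
    (hd : d ∈ closure (W - Y) ∧ ∀ v ∈ closure (W - Y), dist 0 d ≤ dist 0 v)
    (dWY : ℝ) (hdWY : dWY = sInf {t | ∃ u ∈ W, ∃ v ∈ Y, t = dist u v})
    (hattained : ∃ whatt ∈ W, ∃ yhatt ∈ Y, dist whatt yhatt = dWY)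
    (w : ℕ → EuclideanSpace ℝ (Fin n))
    (hw : ∀ k, w (k + 1) = PW (PY (w k))) :
    ∃ wbar : EuclideanSpace ℝ (Fin n),
      Tendsto w atTop (𝓝 wbar) ∧ wbar ∈ W ∧ Metric.infDist wbar Y = dWY ∧
      Tendsto (fun k => PY (w k)) atTop (𝓝 (wbar - d)) ∧ wbar - d ∈ Y ∧
      Metric.infDist (wbar - d) W = dWY := by
  obtain ⟨what, hwhatW, yhat, hyhatY, hwhyh⟩ := hattained
  have hlow : ∀ u ∈ W, ∀ v ∈ Y, dWY ≤ dist u v := by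
    intro u hu v hv
    rw [hdWY]
    exact csInf_le ⟨0, by rintro x ⟨a, _, b, _, rfl⟩; exact dist_nonneg⟩ ⟨u, hu, v, hv, rfl⟩
  have hVIW : ∀ u, ∀ p ∈ W, ⟪u - PW u, p - PW u⟫ ≤ 0 := fun u => proj_vi_s12 hWconv (hPW u).1 (hPW u).2
  have hVIY : ∀ u, ∀ p ∈ Y, ⟪u - PY u, p - PY u⟫ ≤ 0 := fun u => proj_vi_s12 hYconv (hPY u).1 (hPY u).2
  have hclb : ∀ p ∈ closure (W - Y), dWY ≤ ‖p‖ := by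
    intro p hp
    have hsub : W - Y ⊆ {v : EuclideanSpace ℝ (Fin n) | dWY ≤ ‖v‖} := by
      rintro x ⟨a, ha, b, hb, rfl⟩
      simpa [dist_eq_norm] using hlow a ha b hb
    exact closure_minimal hsub (isClosed_le continuous_const continuous_norm) hp
  have hdnorm : ‖d‖ = dWY := by
    apply le_antisymm
    · have hmem : what - yhat ∈ closure (W - Y) := subset_closure (Set.sub_mem_sub hwhatW hyhatY)
      calc ‖d‖ = dist 0 d := by rw [dist_zero_left]
        _ ≤ dist 0 (what - yhat) := hd.2 _ hmem
        _ = dist what yhat := by rw [dist_zero_left, dist_eq_norm]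
        _ = dWY := hwhyh
    · exact hclb d hd.1
  have hconvcl : Convex ℝ (closure (W - Y)) := (hWconv.sub hYconv).closure
  have hduniq : ∀ e ∈ closure (W - Y), ‖e‖ = dWY → e = d := by
    intro e he hne
    refine proj_uniq hconvcl he hd.1 ?_ hd.2
    intro p hp
    calc dist (0 : EuclideanSpace ℝ (Fin n)) e = dWY := by rw [dist_zero_left, hne]
      _ ≤ ‖p‖ := hclb p hp
      _ = dist 0 p := by rw [dist_zero_left]
  have fixlem : ∀ f ∈ W, ∀ g ∈ Y, dist f g = dWY → PY f = f - d ∧ PW (PY f) = f := by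
    intro f hf g hg hfg
    have hq := (hPY f).1
    have hdq : dist f (PY f) = dWY :=
      le_antisymm (le_trans ((hPY f).2 g hg) hfg.le) (hlow f hf _ hq)
    have hfd : f - PY f = d := by
      have hmem : f - PY f ∈ closure (W - Y) := subset_closure (Set.sub_mem_sub hf hq)
      exact hduniq _ hmem (by rw [← dist_eq_norm, hdq])
    have hqd : PY f = f - d := by rw [← hfd]; abel
    refine ⟨hqd, ?_⟩
    have h2 : ∀ p ∈ W, dist (PY f) f ≤ dist (PY f) p := by
      intro p hp
      calc dist (PY f) f = dWY := by rw [dist_comm]; exact hdq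
        _ ≤ dist p (PY f) := hlow p hp _ hq
        _ = dist (PY f) p := dist_comm _ _
    exact proj_uniq hWconv (hPW (PY f)).1 hf (hPW (PY f)).2 h2
  obtain ⟨hwhatfixY, hwhatfix⟩ := fixlem what hwhatW yhat hyhatY hwhyh
  have descent : ∀ f, PW (PY f) = f → ∀ k,
      ‖w (k + 1) - f‖ ^ 2 + ‖(w k - PY (w k)) - (f - PY f)‖ ^ 2 ≤ ‖w k - f‖ ^ 2 := by
    intro f hfix k
    have h1 := firm_proj (hPY (w k)).1 (hPY f).1 (hVIY (w k)) (hVIY f)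
    have h2 := firm_proj (hPW (PY (w k))).1 (hPW (PY f)).1 (hVIW (PY (w k))) (hVIW (PY f))
    rw [hfix] at h2
    rw [hw k]
    have hX : (0 : ℝ) ≤ ‖(PY (w k) - PW (PY (w k))) - (PY f - f)‖ ^ 2 := sq_nonneg _
    linarith
  have hanti : Antitone (fun k => ‖w k - what‖ ^ 2) := by
    apply antitone_nat_of_succ_le
    intro k
    have h := descent what hwhatfix k
    have hX : (0 : ℝ) ≤ ‖(w k - PY (w k)) - (what - PY what)‖ ^ 2 := sq_nonneg _
    show ‖w (k + 1) - what‖ ^ 2 ≤ ‖w k - what‖ ^ 2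
    linarith
  have hbdd : BddBelow (Set.range (fun k => ‖w k - what‖ ^ 2)) :=
    ⟨0, by rintro x ⟨k, rfl⟩; exact sq_nonneg _⟩
  have hslim : Tendsto (fun k => ‖w k - what‖ ^ 2) atTop (𝓝 (⨅ k, ‖w k - what‖ ^ 2)) :=
    tendsto_atTop_ciInf hanti hbdd
  have hwhatd : what - PY what = d := by rw [hwhatfixY]; abel
  have hb0 : Tendsto (fun k => ‖(w k - PY (w k)) - d‖ ^ 2) atTop (𝓝 0) := by
    have hsucc : Tendsto (fun k => ‖w (k + 1) - what‖ ^ 2) atTop (𝓝 (⨅ k, ‖w k - what‖ ^ 2)) :=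
      hslim.comp (tendsto_add_atTop_nat 1)
    have hdd : Tendsto (fun k => ‖w k - what‖ ^ 2 - ‖w (k + 1) - what‖ ^ 2) atTop (𝓝 0) := by
      simpa using hslim.sub hsucc
    refine squeeze_zero (fun k => sq_nonneg _) (fun k => ?_) hdd
    have h := descent what hwhatfix k
    rw [hwhatd] at h
    linarith
  have hbn : Tendsto (fun k => ‖(w k - PY (w k)) - d‖) atTop (𝓝 0) := by
    have h := (Real.continuous_sqrt.tendsto 0).comp hb0
    simp only [Function.comp_def, Real.sqrt_zero] at h
    exact h.congr fun k => Real.sqrt_sq (norm_nonneg _)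
  have hdiff0 : Tendsto (fun k => (w k - PY (w k)) - d) atTop (𝓝 0) :=
    tendsto_zero_iff_norm_tendsto_zero.mpr hbn
  have hball : ∀ k, w k ∈ Metric.closedBall what (dist (w 0) what) := by
    intro k
    have h := hanti (Nat.zero_le k)
    dsimp only at h
    rw [Metric.mem_closedBall, dist_eq_norm, dist_eq_norm]
    nlinarith [norm_nonneg (w k - what), norm_nonneg (w 0 - what)]
  obtain ⟨wbar, _, φ, hφmono, hφlim⟩ :=
    (isCompact_closedBall what (dist (w 0) what)).tendsto_subseq hball
  have hmemW : ∀ m, 1 ≤ m → w m ∈ W := by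
    intro m hm
    obtain ⟨k, rfl⟩ := Nat.exists_eq_add_of_le hm
    rw [add_comm, hw]
    exact (hPW _).1
  have hwbarW : wbar ∈ W := by
    refine hWc.mem_of_tendsto hφlim ?_
    filter_upwards [eventually_ge_atTop 1] with j hj
    exact hmemW _ (le_trans hj hφmono.le_apply)
  have hdiffφ : Tendsto (fun j => (w (φ j) - PY (w (φ j))) - d) atTop (𝓝 0) :=
    hdiff0.comp hφmono.tendsto_atTop
  have hyφ : Tendsto (fun j => PY (w (φ j))) atTop (𝓝 (wbar - d)) := by
    have hA : Tendsto (fun j => w (φ j) - ((w (φ j) - PY (w (φ j))) - d) - d) atTop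
        (𝓝 (wbar - 0 - d)) := (hφlim.sub hdiffφ).sub tendsto_const_nhds
    rw [sub_zero] at hA
    exact hA.congr fun j => by abel
  have hwbardY : wbar - d ∈ Y :=
    hYc.mem_of_tendsto hyφ (Eventually.of_forall fun j => (hPY _).1)
  have hdistwbar : dist wbar (wbar - d) = dWY := by
    rw [dist_eq_norm, sub_sub_cancel, hdnorm]
  obtain ⟨hwbarfixY, hwbarfix⟩ := fixlem wbar hwbarW (wbar - d) hwbardY hdistwbar
  have htanti : Antitone (fun k => ‖w k - wbar‖ ^ 2) := by
    apply antitone_nat_of_succ_le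
    intro k
    have h := descent wbar hwbarfix k
    have hX : (0 : ℝ) ≤ ‖(w k - PY (w k)) - (wbar - PY wbar)‖ ^ 2 := sq_nonneg _
    show ‖w (k + 1) - wbar‖ ^ 2 ≤ ‖w k - wbar‖ ^ 2
    linarith
  have htbdd : BddBelow (Set.range (fun k => ‖w k - wbar‖ ^ 2)) :=
    ⟨0, by rintro x ⟨k, rfl⟩; exact sq_nonneg _⟩
  have htlim : Tendsto (fun k => ‖w k - wbar‖ ^ 2) atTop (𝓝 (⨅ k, ‖w k - wbar‖ ^ 2)) :=
    tendsto_atTop_ciInf htanti htbdd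
  have htφ : Tendsto (fun j => ‖w (φ j) - wbar‖ ^ 2) atTop (𝓝 0) := by
    have h := tendsto_iff_norm_sub_tendsto_zero.mp hφlim
    have h2 := h.pow 2
    simpa using h2
  have hinf0 : (⨅ k, ‖w k - wbar‖ ^ 2) = 0 :=
    tendsto_nhds_unique (htlim.comp hφmono.tendsto_atTop) htφ
  have htzero : Tendsto (fun k => ‖w k - wbar‖ ^ 2) atTop (𝓝 0) := hinf0 ▸ htlim
  have hwnorm : Tendsto (fun k => ‖w k - wbar‖) atTop (𝓝 0) := by
    have h := (Real.continuous_sqrt.tendsto 0).comp htzero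
    simp only [Function.comp_def, Real.sqrt_zero] at h
    exact h.congr fun k => Real.sqrt_sq (norm_nonneg _)
  have hwlim : Tendsto w atTop (𝓝 wbar) := tendsto_iff_norm_sub_tendsto_zero.mpr hwnorm
  have hylim : Tendsto (fun k => PY (w k)) atTop (𝓝 (wbar - d)) := by
    have hA : Tendsto (fun k => w k - ((w k - PY (w k)) - d) - d) atTop
        (𝓝 (wbar - 0 - d)) := (hwlim.sub hdiff0).sub tendsto_const_nhds
    rw [sub_zero] at hA
    exact hA.congr fun k => by abel
  refine ⟨wbar, hwlim, hwbarW, ?_, hylim, hwbardY, ?_⟩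
  · apply le_antisymm
    · calc Metric.infDist wbar Y ≤ dist wbar (wbar - d) := Metric.infDist_le_dist_of_mem hwbardY
        _ = dWY := hdistwbar
    · refine not_lt.mp fun hlt => ?_
      obtain ⟨y, hy, hylt⟩ := (Metric.infDist_lt_iff hYne).mp hlt
      exact absurd (hlow wbar hwbarW y hy) (not_le.mpr hylt)
  · apply le_antisymm
    · calc Metric.infDist (wbar - d) W ≤ dist (wbar - d) wbar :=
          Metric.infDist_le_dist_of_mem hwbarW
        _ = dWY := by rw [dist_comm]; exact hdistwbar
    · refine not_lt.mp fun hlt => ?_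
      obtain ⟨p, hp, hplt⟩ := (Metric.infDist_lt_iff hWne).mp hlt
      rw [dist_comm] at hplt
      exact absurd (hlow p hp _ hwbardY) (not_le.mpr hplt)
end

section
/- Let W = {x ∈ ℝⁿ : Cx ≤ c} and Y = {x ∈ ℝⁿ : Dx ≤ e} be nonempty polyhedra in ℝⁿ (C a real p×n matrix, c ∈ ℝᵖ, D a real q×n matrix, e ∈ ℝ^q, inequalities componentwise). Then the distance between W and Y is attained: there exist w ∈ W and y ∈ Y with ‖w − y‖₂ = dist(W, Y) = inf{‖w' − y'‖₂ : w' ∈ W, y' ∈ Y}. -/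
/-- A set is a polyhedron: finite intersection of closed halfspaces. -/
def IsPolyFM {E : Type*} [AddCommGroup E] [Module ℝ E] (S : Set E) : Prop :=
  ∃ (ι : Type) (_ : Fintype ι) (f : ι → E →ₗ[ℝ] ℝ) (b : ι → ℝ),
    S = {x | ∀ i, f i x ≤ b i}

theorem IsPolyFM.image_equiv {E F : Type*} [AddCommGroup E] [Module ℝ E]
    [AddCommGroup F] [Module ℝ F] (e : E ≃ₗ[ℝ] F) {S : Set E}
    (h : IsPolyFM S) : IsPolyFM (e '' S) := by
  obtain ⟨ι, inst, f, b, rfl⟩ := h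
  refine ⟨ι, inst, fun i => (f i).comp e.symm.toLinearMap, b, ?_⟩
  ext y
  simp only [Set.mem_image, Set.mem_setOf_eq, LinearMap.comp_apply,
    LinearEquiv.coe_coe]
  constructor
  · rintro ⟨x, hx, rfl⟩ i
    simpa using hx i
  · intro hy
    exact ⟨e.symm y, hy, by simp⟩

/-- Fourier–Motzkin elimination step: projecting out the last real variable. -/
theorem IsPolyFM.fst_image {E : Type*} [AddCommGroup E] [Module ℝ E]
    {S : Set (E × ℝ)} (h : IsPolyFM S) : IsPolyFM (Prod.fst '' S) := by
  classical
  obtain ⟨ι, inst, f, b, rfl⟩ := h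
  set a : ι → ℝ := fun i => f i (0, 1) with ha
  set g : ι → E →ₗ[ℝ] ℝ := fun i => (f i).comp (LinearMap.inl ℝ E ℝ) with hg
  have hf : ∀ i (x : E) (t : ℝ), f i (x, t) = g i x + t * a i := by
    intro i x t
    have hxt : (x, t) = (x, (0:ℝ)) + t • ((0:E), (1:ℝ)) := by
      simp [Prod.ext_iff]
    rw [hxt, map_add, map_smul]
    simp [g, a, smul_eq_mul]
  set u : E → ι → ℝ := fun x i => (b i - g i x) / a i with hu
  refine ⟨{i // a i = 0} ⊕ {p : ι × ι // 0 < a p.1 ∧ a p.2 < 0}, inferInstance,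
    Sum.elim (fun i => g i.1) (fun p => a p.1.1 • g p.1.2 - a p.1.2 • g p.1.1),
    Sum.elim (fun i => b i.1) (fun p => a p.1.1 * b p.1.2 - a p.1.2 * b p.1.1), ?_⟩
  ext x
  constructor
  · rintro ⟨⟨w, t⟩, hS, rfl⟩ i'
    rcases i' with ⟨i, hi⟩ | ⟨⟨i, j⟩, hij⟩
    · have h1 := hS i
      rw [hf i w t] at h1
      have : t * a i = 0 := by rw [hi]; ring
      simpa using by linarith
    · have h1 := hS i
      have h2 := hS j
      rw [hf i w t] at h1
      rw [hf j w t] at h2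
      simp only [Sum.elim_inr, LinearMap.sub_apply, LinearMap.smul_apply,
        smul_eq_mul]
      nlinarith [mul_le_mul_of_nonneg_left h1 (neg_nonneg.2 hij.2.le),
        mul_le_mul_of_nonneg_left h2 hij.1.le, hij.1, hij.2]
  · intro hx
    simp only [Set.mem_setOf_eq] at hx
    have key : ∀ i j, 0 < a i → a j < 0 → u x j ≤ u x i := by
      intro i j hi hj
      have hx' := hx (Sum.inr ⟨(i, j), hi, hj⟩)
      simp only [Sum.elim_inr, LinearMap.sub_apply, LinearMap.smul_apply,
        smul_eq_mul] at hx'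
      rw [hu]
      rw [le_div_iff₀ hi, div_mul_eq_mul_div, div_le_iff_of_neg hj]
      nlinarith
    have hzero : ∀ i, a i = 0 → g i x ≤ b i := by
      intro i hi
      simpa using hx (Sum.inl ⟨i, hi⟩)
    have hex : ∃ t : ℝ, (∀ i, 0 < a i → t ≤ u x i) ∧ (∀ j, a j < 0 → u x j ≤ t) := by
      by_cases hP : (Finset.univ.filter (fun i => 0 < a i)).Nonempty
      · refine ⟨(Finset.univ.filter (fun i => 0 < a i)).inf' hP (u x),
          fun i hi => Finset.inf'_le _ (by simp [hi]), fun j hj => ?_⟩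
        obtain ⟨i, hiM, hieq⟩ := Finset.exists_mem_eq_inf' hP (u x)
        rw [hieq]
        exact key i j (by simpa using hiM) hj
      · by_cases hN : (Finset.univ.filter (fun j => a j < 0)).Nonempty
        · exact ⟨(Finset.univ.filter (fun j => a j < 0)).sup' hN (u x),
            fun i hi => absurd ⟨i, by simp [hi]⟩ hP,
            fun j hj => Finset.le_sup' _ (by simp [hj])⟩
        · exact ⟨0, fun i hi => absurd ⟨i, by simp [hi]⟩ hP,
            fun j hj => absurd ⟨j, by simp [hj]⟩ hN⟩
    obtain ⟨t, htpos, htneg⟩ := hex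
    refine ⟨(x, t), fun i => ?_, rfl⟩
    rw [hf]
    rcases lt_trichotomy (a i) 0 with h | h | h
    · have h1 : u x i ≤ t := htneg i h
      have h2 : t * a i ≤ u x i * a i := mul_le_mul_of_nonpos_right h1 h.le
      have h3 : u x i * a i = b i - g i x := div_mul_cancel₀ _ h.ne
      linarith
    · have h1 := hzero i h
      have h2 : t * a i = 0 := by rw [h]; ring
      linarith
    · have h1 : t ≤ u x i := htpos i h
      have h2 : t * a i ≤ u x i * a i := mul_le_mul_of_nonneg_right h1 h.le
      have h3 : u x i * a i = b i - g i x := div_mul_cancel₀ _ h.ne'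
      linarith

/-- The linear equivalence `(Fin (k+1) → ℝ) ≃ₗ (Fin k → ℝ) × ℝ`. -/
noncomputable def finSnocEquivFM (k : ℕ) : (Fin (k + 1) → ℝ) ≃ₗ[ℝ] (Fin k → ℝ) × ℝ where
  toFun y := (fun i => y i.castSucc, y (Fin.last k))
  invFun p := Fin.snoc p.1 p.2
  map_add' y z := rfl
  map_smul' r y := rfl
  left_inv y := by
    funext i
    induction i using Fin.lastCases with
    | last => simp
    | cast i => simp
  right_inv p := by
    ext i <;> simp

/-- Projecting out finitely many real variables preserves polyhedrality. -/
theorem IsPolyFM.fst_image_pi {E : Type*} [AddCommGroup E] [Module ℝ E] :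
    ∀ (k : ℕ) (S : Set (E × (Fin k → ℝ))), IsPolyFM S → IsPolyFM (Prod.fst '' S) := by
  intro k
  induction k with
  | zero =>
    intro S hS
    obtain ⟨ι, inst, f, b, rfl⟩ := hS
    refine ⟨ι, inst, fun i => (f i).comp (LinearMap.inl ℝ E (Fin 0 → ℝ)), b, ?_⟩
    ext x
    constructor
    · rintro ⟨⟨w, y⟩, hS, rfl⟩ i
      have hy : y = 0 := Subsingleton.elim _ _
      subst hy
      simpa using hS i
    · intro hx
      exact ⟨(x, 0), fun i => by simpa using hx i, rfl⟩
  | succ k ih =>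
    intro S hS
    let e : (E × (Fin (k + 1) → ℝ)) ≃ₗ[ℝ] (E × (Fin k → ℝ)) × ℝ :=
      ((LinearEquiv.refl ℝ E).prodCongr (finSnocEquivFM k)) ≪≫ₗ
        (LinearEquiv.prodAssoc ℝ E (Fin k → ℝ) ℝ).symm
    have himg : Prod.fst '' S = Prod.fst '' (Prod.fst '' (e '' S)) := by
      rw [Set.image_image, Set.image_image]
      rfl
    rw [himg]
    exact ih _ ((hS.image_equiv e).fst_image)

/-- A polyhedron is closed (in a finite-dimensional normed space). -/
theorem IsPolyFM.isClosed {E : Type*} [NormedAddCommGroup E] [NormedSpace ℝ E]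
    [FiniteDimensional ℝ E] {S : Set E} (h : IsPolyFM S) : IsClosed S := by
  obtain ⟨ι, inst, f, b, rfl⟩ := h
  have : {x : E | ∀ i, f i x ≤ b i} = ⋂ i, {x | f i x ≤ b i} := by
    ext x; simp
  rw [this]
  exact isClosed_iInter fun i =>
    isClosed_le (f i).continuous_of_finiteDimensional continuous_const

/-- The distance between two nonempty polyhedra
W = {x : Cx ≤ c} and Y = {x : Dx ≤ e} in ℝⁿ is attained. -/
theorem dist_polyhedra_attained {n p q : ℕ}
    (C : Matrix (Fin p) (Fin n) ℝ) (c : Fin p → ℝ)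
    (D : Matrix (Fin q) (Fin n) ℝ) (e : Fin q → ℝ)
    (W Y : Set (EuclideanSpace ℝ (Fin n)))
    (hW : W = {x | ∀ i, C.mulVec (WithLp.ofLp x) i ≤ c i})
    (hY : Y = {x | ∀ j, D.mulVec (WithLp.ofLp x) j ≤ e j})
    (hWne : W.Nonempty) (hYne : Y.Nonempty) :
    ∃ w ∈ W, ∃ y ∈ Y, dist w y = sInf {t | ∃ u ∈ W, ∃ v ∈ Y, t = dist u v} := by
  classical
  let E := EuclideanSpace ℝ (Fin n)
  -- row functionals
  let φC : Fin p → E →ₗ[ℝ] ℝ := fun i =>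
    (LinearMap.proj i).comp (C.mulVecLin.comp
      (WithLp.linearEquiv 2 ℝ (Fin n → ℝ)).toLinearMap)
  let φD : Fin q → E →ₗ[ℝ] ℝ := fun j =>
    (LinearMap.proj j).comp (D.mulVecLin.comp
      (WithLp.linearEquiv 2 ℝ (Fin n → ℝ)).toLinearMap)
  have hφC : ∀ i (x : E), φC i x = C.mulVec (WithLp.ofLp x) i := fun _ _ => rfl
  have hφD : ∀ j (x : E), φD j x = D.mulVec (WithLp.ofLp x) j := fun _ _ => rfl
  -- the polyhedron P = {(z,y) : C(z+y) ≤ c, Dy ≤ e}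
  let f : Fin p ⊕ Fin q → (E × E) →ₗ[ℝ] ℝ :=
    Sum.elim (fun i => (φC i).comp (LinearMap.fst ℝ E E + LinearMap.snd ℝ E E))
      (fun j => (φD j).comp (LinearMap.snd ℝ E E))
  let b : Fin p ⊕ Fin q → ℝ := Sum.elim c e
  set P : Set (E × E) := {v | ∀ i, f i v ≤ b i} with hP
  have hPpoly : IsPolyFM P := ⟨_, inferInstance, f, b, rfl⟩
  have hmemP : ∀ z y : E, (z, y) ∈ P ↔
      ((∀ i, C.mulVec (WithLp.ofLp (z + y)) i ≤ c i) ∧ ∀ j, D.mulVec (WithLp.ofLp y) j ≤ e j) := by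
    intro z y
    constructor
    · intro h
      exact ⟨fun i => h (Sum.inl i), fun j => h (Sum.inr j)⟩
    · rintro ⟨h1, h2⟩ (i | j)
      · exact h1 i
      · exact h2 j
  -- transport to E × (Fin n → ℝ) and project
  let e2 : (E × E) ≃ₗ[ℝ] E × (Fin n → ℝ) :=
    (LinearEquiv.refl ℝ E).prodCongr (WithLp.linearEquiv 2 ℝ (Fin n → ℝ))
  set Z : Set E := Prod.fst '' (e2 '' P) with hZ
  have hZpoly : IsPolyFM Z := IsPolyFM.fst_image_pi n _ (hPpoly.image_equiv e2)
  have hZfst : Z = Prod.fst '' P := by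
    rw [hZ, Set.image_image]
    rfl
  have hZmem : ∀ z : E, z ∈ Z ↔ ∃ w ∈ W, ∃ y ∈ Y, z = w - y := by
    intro z
    rw [hZfst]
    constructor
    · rintro ⟨⟨z', y'⟩, hmem, rfl⟩
      rw [hmemP] at hmem
      refine ⟨z' + y', ?_, y', ?_, by simp⟩
      · rw [hW]; exact hmem.1
      · rw [hY]; exact hmem.2
    · rintro ⟨w, hw, y, hy, rfl⟩
      refine ⟨(w - y, y), ?_, rfl⟩
      rw [hmemP]
      rw [hW] at hw
      rw [hY] at hy
      refine ⟨fun i => ?_, hy⟩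
      rw [sub_add_cancel]
      exact hw i
  have hZclosed : IsClosed Z := hZpoly.isClosed
  obtain ⟨w₀, hw₀⟩ := hWne
  obtain ⟨y₀, hy₀⟩ := hYne
  have hZne : Z.Nonempty := ⟨w₀ - y₀, (hZmem _).2 ⟨w₀, hw₀, y₀, hy₀, rfl⟩⟩
  obtain ⟨z₀, hz₀Z, hz₀d⟩ := hZclosed.exists_infDist_eq_dist hZne 0
  obtain ⟨w, hw, y, hy, hzwy⟩ := (hZmem z₀).1 hz₀Z
  refine ⟨w, hw, y, hy, ?_⟩
  have hdwy : dist w y = dist (0 : E) z₀ := by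
    rw [hzwy, dist_eq_norm, dist_eq_norm]
    simp
    exact norm_sub_rev _ _
  have hmemT : dist w y ∈ {t | ∃ u ∈ W, ∃ v ∈ Y, t = dist u v} :=
    ⟨w, hw, y, hy, rfl⟩
  have hbdd : BddBelow {t | ∃ u ∈ W, ∃ v ∈ Y, t = dist u v} := by
    refine ⟨0, fun t ht => ?_⟩
    obtain ⟨u, hu, v, hv, rfl⟩ := ht
    exact dist_nonneg
  apply le_antisymm
  · refine le_csInf ⟨dist w y, hmemT⟩ ?_
    rintro t ⟨u, hu, v, hv, rfl⟩
    have huv : u - v ∈ Z := (hZmem _).2 ⟨u, hu, v, hv, rfl⟩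
    have h5 : Metric.infDist (0 : E) Z ≤ dist (0 : E) (u - v) :=
      Metric.infDist_le_dist_of_mem huv
    rw [hdwy, ← hz₀d]
    calc Metric.infDist (0 : E) Z ≤ dist (0 : E) (u - v) := h5
      _ = dist u v := by
          rw [dist_eq_norm, dist_eq_norm]
          simp
          exact norm_sub_rev _ _
  · exact csInf_le hbdd hmemT
end
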